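/- arXiv:2505.10707 — 8 statements merged into one kernel-verified Lean document; each statement's English description precedes it below -/
import Mathlib

section
/- Let A ⊆ ℕ^n be an affine semigroup and p a prime. Then the p-weak normalization *pA is a finitely generated additive submonoid of ℤ^n. -/
/-- The coordinatewise embedding of `ℤ^n` into `ℝ^n`. -/
noncomputable def toR {n : ℕ} (v : Fin n → ℤ) : Fin n → ℝ := fun i => (v i : ℝ)

/-- The normalization (saturation) `Ā` of an affine semigroup `A ⊆ ℤ^n`:
the elements `v` of the group `G(A)` generated by `A` such that `m • v ∈ A`
for some positive integer `m`. -/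
def normalization {n : ℕ} (A : AddSubmonoid (Fin n → ℤ)) : Set (Fin n → ℤ) :=
  {v | v ∈ AddSubgroup.closure (A : Set (Fin n → ℤ)) ∧ ∃ m : ℕ, 0 < m ∧ m • v ∈ A}

/-- The seminormalization `⁺A`: elements `v ∈ G(A)` with `m • v ∈ A` and `m' • v ∈ A`
for some coprime positive integers `m, m'`. -/
def seminormalization {n : ℕ} (A : AddSubmonoid (Fin n → ℤ)) : Set (Fin n → ℤ) :=
  {v | v ∈ AddSubgroup.closure (A : Set (Fin n → ℤ)) ∧
    ∃ m m' : ℕ, 0 < m ∧ 0 < m' ∧ Nat.Coprime m m' ∧ m • v ∈ A ∧ m' • v ∈ A}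

/-- The `p`-weak normalization `*pA`: elements `v ∈ Ā` with `p ^ e • v ∈ A` for some `e`. -/
def pWeakNormalization {n : ℕ} (A : AddSubmonoid (Fin n → ℤ)) (p : ℕ) : Set (Fin n → ℤ) :=
  {v | v ∈ normalization A ∧ ∃ e : ℕ, p ^ e • v ∈ A}

/-- The quotient `⟦A/m⟧ = {v ∈ Ā : m • v ∈ A}`. -/
def quotBy {n : ℕ} (A : AddSubmonoid (Fin n → ℤ)) (m : ℕ) : Set (Fin n → ℤ) :=
  {v | v ∈ normalization A ∧ m • v ∈ A}

/-! Write `A` as the closure of a finite set `T ⊆ ℕ^n`. If `m • v = Σ c_t t`, then `v` differs from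
`Σ (c_t / m) t ∈ A` by a vector `w` with `m • w = Σ (c_t % m) t`, so `w` lies in the finite box
`[0, Σ T]`; hence `Ā ⊆ F + A` for a finite `F`. Any submonoid `N` with `A ≤ N ⊆ F + A` is finitely
generated: for each `w ∈ F`, Dickson's lemma leaves finitely many minimal `x ∈ ℕ^T` with
`w + Σ x_t t ∈ N`, and these elements together with `T` generate `N`. The `p`-weak
normalization is such a submonoid. -/

open scoped Pointwise

section Dickson

variable {M ι : Type*} [AddCommMonoid M] [Finite ι]

theorem exists_finite_subset_add_mrange (φ : (ι → ℕ) →+ M) {N F : Set M} (hF : F.Finite)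
    (hNF : N ⊆ F + AddMonoidHom.mrange φ) :
    ∃ G : Set M, G.Finite ∧ G ⊆ N ∧ N ⊆ G + AddMonoidHom.mrange φ := by
  let J : M → Set (ι → ℕ) := fun w => {x | w + φ x ∈ N}
  refine ⟨⋃ w ∈ F, (fun x => w + φ x) '' {x | Minimal (· ∈ J w) x}, ?_, ?_, ?_⟩
  · exact hF.biUnion fun w _ =>
      ((WellQuasiOrderedLE.finite_of_isAntichain (setOfPred_minimal_antichain _)).image _)
  · simp only [Set.iUnion_subset_iff, Set.image_subset_iff]
    exact fun w _ x hx => hx.prop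
  · rintro v hv
    obtain ⟨w, hw, _, ⟨x, rfl⟩, rfl⟩ := hNF hv
    obtain ⟨b, hbx, hb⟩ := (Set.isPWO_of_wellQuasiOrderedLE (J w)).exists_le_minimal (a := x) hv
    refine ⟨w + φ b, Set.mem_biUnion hw ⟨b, hb, rfl⟩, φ (x - b), ⟨x - b, rfl⟩, ?_⟩
    dsimp only
    rw [add_assoc, ← map_add, add_tsub_cancel_of_le hbx]

theorem AddSubmonoid.fg_of_le_of_subset_finite_add {A N : AddSubmonoid M} (hA : A.FG)
    (hAN : A ≤ N) {F : Set M} (hF : F.Finite) (hNF : (N : Set M) ⊆ F + A) : N.FG := by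
  classical
  obtain ⟨T, rfl⟩ := hA
  let φ : (T → ℕ) →+ M := (Fintype.linearCombination ℕ ((↑) : T → M)).toAddMonoidHom
  have hφ : AddMonoidHom.mrange φ = AddSubmonoid.closure (T : Set M) := by
    ext v
    simp [φ, Fintype.linearCombination_apply, AddSubmonoid.mem_closure_finset', eq_comm]
  obtain ⟨G, hG, hGN, hNG⟩ := exists_finite_subset_add_mrange φ hF (hφ ▸ hNF)
  refine (AddSubmonoid.fg_iff N).2 ⟨G ∪ T, le_antisymm ?_ ?_, hG.union T.finite_toSet⟩
  · exact AddSubmonoid.closure_le.2 (Set.union_subset hGN (AddSubmonoid.subset_closure.trans hAN))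
  · intro v hv
    obtain ⟨g, hg, a, ha, rfl⟩ := hNG hv
    exact add_mem (AddSubmonoid.subset_closure (Or.inl hg))
      (AddSubmonoid.closure_mono Set.subset_union_right (hφ ▸ ha))

end Dickson

theorem normalization_subset_Icc_add {n : ℕ} {A : AddSubmonoid (Fin n → ℤ)}
    {T : Finset (Fin n → ℤ)} (hT : AddSubmonoid.closure (T : Set (Fin n → ℤ)) = A)
    (hA : ∀ v ∈ A, 0 ≤ v) : normalization A ⊆ Set.Icc 0 (∑ t ∈ T, t) + A := by
  subst hT
  rintro v ⟨-, m, hm, hmv⟩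
  obtain ⟨c, hc⟩ := AddSubmonoid.mem_closure_finset'.1 hmv
  have hmem (k : T → ℕ) : ∑ t : T, k t • (t : Fin n → ℤ) ∈ AddSubmonoid.closure (T : Set _) :=
    AddSubmonoid.sum_mem _ fun t _ => nsmul_mem (AddSubmonoid.subset_closure t.2) _
  set a := ∑ t : T, (c t / m) • (t : Fin n → ℤ)
  set r := ∑ t : T, (c t % m) • (t : Fin n → ℤ)
  have hmw : m • (v - a) = r := by
    rw [smul_sub, hc, Finset.smul_sum, ← Finset.sum_sub_distrib]
    refine Finset.sum_congr rfl fun t _ => ?_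
    rw [smul_smul, sub_eq_iff_eq_add', ← add_nsmul, Nat.div_add_mod]
  have hrle : m • ∑ t ∈ T, t - r = ∑ t : T, (m - c t % m) • (t : Fin n → ℤ) := by
    rw [Finset.smul_sum, ← Finset.sum_coe_sort T, ← Finset.sum_sub_distrib]
    refine Finset.sum_congr rfl fun t _ => ?_
    rw [sub_nsmul _ (Nat.mod_lt _ hm).le, sub_eq_add_neg]
  refine ⟨v - a, ⟨fun j => ?_, fun j => ?_⟩, a, hmem _, sub_add_cancel v a⟩
  · have h : m • (0 : Fin n → ℤ) ≤ m • (v - a) := by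
      rw [smul_zero, hmw]
      exact hA r (hmem _)
    exact le_of_nsmul_le_nsmul_right hm.ne' (h j)
  · have h : m • (v - a) ≤ m • ∑ t ∈ T, t := by
      rw [hmw, ← sub_nonneg, hrle]
      exact hA _ (hmem _)
    exact le_of_nsmul_le_nsmul_right hm.ne' (h j)

theorem AddSubmonoid.mul_nsmul_add_mem {M : Type*} [AddCommMonoid M] (A : AddSubmonoid M)
    {v w : M} {k l : ℕ} (hv : k • v ∈ A) (hw : l • w ∈ A) : (k * l) • (v + w) ∈ A := by
  rw [smul_add, mul_comm, mul_nsmul', mul_nsmul]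
  exact A.add_mem (nsmul_mem hv l) (nsmul_mem hw k)

section

variable {n : ℕ} (A : AddSubmonoid (Fin n → ℤ)) (p : ℕ)

def pWeakNormalizationSubmonoid : AddSubmonoid (Fin n → ℤ) where
  carrier := pWeakNormalization A p
  add_mem' := by
    rintro v w ⟨⟨hvG, k, hk, hkv⟩, e, hev⟩ ⟨⟨hwG, l, hl, hlw⟩, f, hfw⟩
    exact ⟨⟨add_mem hvG hwG, k * l, Nat.mul_pos hk hl, A.mul_nsmul_add_mem hkv hlw⟩,
      e + f, pow_add p e f ▸ A.mul_nsmul_add_mem hev hfw⟩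
  zero_mem' := ⟨⟨zero_mem _, 1, one_pos, by simp⟩, 0, by simp⟩

theorem le_pWeakNormalizationSubmonoid : A ≤ pWeakNormalizationSubmonoid A p := fun v hv =>
  ⟨⟨AddSubgroup.subset_closure hv, 1, one_pos, by simpa using hv⟩, 0, by simpa using hv⟩

end

theorem stmt1_general (n : ℕ) (A : AddSubmonoid (Fin n → ℤ)) (hFG : A.FG)
    (hnonneg : ∀ v ∈ A, ∀ i, 0 ≤ v i) (p : ℕ) :
    ∃ S : Finset (Fin n → ℤ),
      (AddSubmonoid.closure (S : Set (Fin n → ℤ)) : Set (Fin n → ℤ)) =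
        pWeakNormalization A p := by
  obtain ⟨T, hT⟩ := hFG
  obtain ⟨S, hS⟩ := AddSubmonoid.fg_of_le_of_subset_finite_add ⟨T, hT⟩
    (le_pWeakNormalizationSubmonoid A p) (Set.finite_Icc 0 (∑ t ∈ T, t))
    fun v hv => normalization_subset_Icc_add hT hnonneg hv.1
  exact ⟨S, congrArg SetLike.coe hS⟩

/-- For an affine semigroup `A ⊆ ℕ^n` and a prime `p`, the `p`-weak
normalization `*pA` is a finitely generated additive submonoid of `ℤ^n`. -/
theorem stmt1 (n : ℕ) (A : AddSubmonoid (Fin n → ℤ)) (hFG : A.FG)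
    (hnonneg : ∀ v ∈ A, ∀ i, 0 ≤ v i) (p : ℕ) (hp : p.Prime) :
    ∃ S : Finset (Fin n → ℤ),
      (AddSubmonoid.closure (S : Set (Fin n → ℤ)) : Set (Fin n → ℤ)) =
        pWeakNormalization A p :=
  stmt1_general n A hFG hnonneg p
end

section
/- Let A ⊆ ℕ^n be an affine semigroup and let p and q be two distinct primes. Then ⁺A = *pA ∩ *qA, i.e. the seminormalization of A equals the intersection of the p-weak normalization and the q-weak normalization. -/
/-
If `m • v` and `m' • v` lie in `A` with `m, m'` coprime, then so does `N • v` for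
every `N ≥ m m'`, since such `N` are nonnegative combinations of `m` and `m'` (the Frobenius
number of `{m, m'}` is `m m' - m - m'`); in particular `p ^ e • v ∈ A` for large `e`.
Conversely, `p ^ e` and `q ^ f` are coprime for distinct primes `p, q`.
-/

theorem AddSubmonoid.mem_of_coprime_of_mul_le {S : AddSubmonoid ℕ} {m m' N : ℕ}
    (cop : Nat.Coprime m m') (hm : m ∈ S) (hm' : m' ∈ S) (hN : m * m' ≤ N) : N ∈ S := by
  by_cases h : 1 < m ∧ 1 < m'
  · have hclosure : N ∈ AddSubmonoid.closure ({m, m'} : Set ℕ) := by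
      by_contra hN'
      have hgap := (frobeniusNumber_pair cop h.1 h.2).2 hN'
      have hsum : m + m' ≤ m * m' := add_le_mul h.1 h.2
      omega
    exact AddSubmonoid.closure_le.2 (Set.pair_subset hm hm') hclosure
  · have one_mem : 1 ∈ S := by
      obtain rfl | rfl | rfl | rfl : m = 0 ∨ m = 1 ∨ m' = 0 ∨ m' = 1 := by omega
      · rwa [(Nat.coprime_zero_left _).1 cop] at hm'
      · exact hm
      · rwa [(Nat.coprime_zero_right _).1 cop] at hm
      · exact hm'
    simpa using S.nsmul_mem one_mem N

theorem AddSubmonoid.nsmul_mem_of_coprime {M : Type*} [AddCommMonoid M] (A : AddSubmonoid M)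
    {v : M} {m m' N : ℕ} (cop : Nat.Coprime m m') (hm : m • v ∈ A) (hm' : m' • v ∈ A)
    (hN : m * m' ≤ N) : N • v ∈ A :=
  AddSubmonoid.mem_of_coprime_of_mul_le (S := A.comap (multiplesHom M v)) cop hm hm' hN

theorem AddSubmonoid.exists_pow_nsmul_mem_of_coprime {M : Type*} [AddCommMonoid M]
    (A : AddSubmonoid M) {v : M} {m m' p : ℕ} (cop : Nat.Coprime m m') (hm : m • v ∈ A)
    (hm' : m' • v ∈ A) (hp : 1 < p) : ∃ e : ℕ, p ^ e • v ∈ A :=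
  ⟨m * m', A.nsmul_mem_of_coprime cop hm hm' (Nat.lt_pow_self hp).le⟩

theorem stmt3_general (n : ℕ) (A : AddSubmonoid (Fin n → ℤ))
    (p q : ℕ) (hp : p.Prime) (hq : q.Prime)
    (hpq : p ≠ q) :
    seminormalization A = pWeakNormalization A p ∩ pWeakNormalization A q := by
  ext v
  constructor
  · rintro ⟨hG, m, m', hm, hm', cop, hv, hv'⟩
    exact ⟨⟨⟨hG, m, hm, hv⟩, A.exists_pow_nsmul_mem_of_coprime cop hv hv' hp.one_lt⟩,
      ⟨⟨hG, m, hm, hv⟩, A.exists_pow_nsmul_mem_of_coprime cop hv hv' hq.one_lt⟩⟩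
  · rintro ⟨⟨⟨hG, -⟩, e, he⟩, -, f, hf⟩
    exact ⟨hG, p ^ e, q ^ f, pow_pos hp.pos e, pow_pos hq.pos f,
      ((Nat.coprime_primes hp hq).2 hpq).pow e f, he, hf⟩

/-- for distinct primes `p ≠ q`, `⁺A = *pA ∩ *qA`. -/
theorem stmt3 (n : ℕ) (A : AddSubmonoid (Fin n → ℤ)) (hFG : A.FG)
    (hnonneg : ∀ v ∈ A, ∀ i, 0 ≤ v i) (p q : ℕ) (hp : p.Prime) (hq : q.Prime)
    (hpq : p ≠ q) :
    seminormalization A = pWeakNormalization A p ∩ pWeakNormalization A q :=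
  stmt3_general n A p q hp hq hpq
end

section
/- Let A ⊆ ℕ^n be an affine semigroup and p a prime. Then there exists N₀ ∈ ℕ such that p^{N₀}•v ∈ A for every v ∈ *pA, i.e. p^{N₀}(*pA) ⊆ A. -/
theorem AddSubmonoid.pow_nsmul_mem_of_le {M : Type*} [AddMonoid M] {A : AddSubmonoid M}
    {p e e' : ℕ} {w : M} (hle : e ≤ e') (hw : p ^ e • w ∈ A) : p ^ e' • w ∈ A := by
  obtain ⟨k, hk⟩ := pow_dvd_pow p hle
  rw [hk, mul_comm, mul_smul]
  exact A.nsmul_mem hw k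

theorem Monotone.exists_forall_subset_of_add_mem {M : Type*} [AddCommMonoid M] [PartialOrder M]
    [WellQuasiOrderedLE M] [CanonicallyOrderedAdd M] {I : ℕ → Set M} (hmono : Monotone I)
    (hadd : ∀ e a {b}, b ∈ I e → a + b ∈ I e) : ∃ N, ∀ e, I e ⊆ I N := by
  let J : ℕ →o AddSemigroupIdeal M := ⟨fun e => ⟨I e, hadd e⟩, fun _ _ h => hmono h⟩
  obtain ⟨N, hN⟩ := WellFoundedGT.monotone_chain_condition J
  refine ⟨N, fun e => ?_⟩
  rcases le_total e N with h | h
  · exact hmono h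
  · exact (congrArg SetLike.coe (hN e h)).ge

theorem exists_forall_pow_nsmul_add_mem {ι M : Type*} [Finite ι] [AddCommMonoid M]
    {A : AddSubmonoid M} (f : (ι → ℕ) →+ M) (hf : ∀ c, f c ∈ A) (t : M) (p : ℕ) :
    ∃ N, ∀ e c, p ^ e • (t + f c) ∈ A → p ^ N • (t + f c) ∈ A := by
  refine Monotone.exists_forall_subset_of_add_mem (I := fun e => {c | p ^ e • (t + f c) ∈ A})
    (fun e e' hle c hc => A.pow_nsmul_mem_of_le hle hc) ?_
  intro e a c (hc : p ^ e • (t + f c) ∈ A)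
  change p ^ e • (t + f (a + c)) ∈ A
  rw [map_add, add_left_comm, smul_add]
  exact A.add_mem (A.nsmul_mem (hf a) _) hc

theorem Fintype.linearCombination_eq_nsmul_div_add_mod {ι M : Type*} [Fintype ι]
    [AddCommMonoid M] (x : ι → M) (m : ℕ) (d : ι → ℕ) :
    Fintype.linearCombination ℕ x d = m • Fintype.linearCombination ℕ x (fun i => d i / m) +
      Fintype.linearCombination ℕ x (fun i => d i % m) := by
  rw [← map_nsmul, ← map_add]
  congr 1
  ext i
  simp [Nat.div_add_mod]

theorem Fintype.abs_linearCombination_apply_le {ι κ : Type*} [Fintype ι] (x : ι → κ → ℤ)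
    {m : ℕ} {r : ι → ℕ} (hr : ∀ i, r i ≤ m) (k : κ) :
    |Fintype.linearCombination ℕ x r k| ≤ m * ∑ i, |x i k| := by
  rw [Fintype.linearCombination_apply, Finset.sum_apply, Finset.mul_sum]
  refine (Finset.abs_sum_le_sum_abs _ _).trans (Finset.sum_le_sum fun i _ => ?_)
  rw [Pi.smul_apply, nsmul_eq_mul, abs_mul, Nat.abs_cast]
  gcongr
  exact hr i

theorem exists_finite_forall_eq_add_linearCombination_of_nsmul_mem {ι κ : Type*} [Fintype ι]
    [Finite κ] (x : ι → κ → ℤ) :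
    ∃ T : Set (κ → ℤ), T.Finite ∧ ∀ (m : ℕ) (v : κ → ℤ), 0 < m →
      m • v ∈ AddSubmonoid.closure (Set.range x) →
        ∃ t ∈ T, ∃ c, v = t + Fintype.linearCombination ℕ x c := by
  set B : κ → ℤ := fun k => ∑ i, |x i k|
  refine ⟨Set.univ.pi fun k => Set.Icc (-B k) (B k), Set.Finite.pi fun _ => Set.finite_Icc _ _,
    fun m v hm hmv => ?_⟩
  obtain ⟨d, hd⟩ := AddSubmonoid.mem_closure_range_iff_of_fintype.mp hmv
  set c : ι → ℕ := fun i => d i / m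
  refine ⟨v - Fintype.linearCombination ℕ x c, fun k _ => abs_le.mp ?_, c,
    (sub_add_cancel _ _).symm⟩
  have hrem : m • (v - Fintype.linearCombination ℕ x c) =
      Fintype.linearCombination ℕ x (fun i => d i % m) := by
    rw [smul_sub, hd, ← Fintype.linearCombination_apply ℕ,
      Fintype.linearCombination_eq_nsmul_div_add_mod x m d, add_sub_cancel_left]
  have hbound := Fintype.abs_linearCombination_apply_le x (fun i => (Nat.mod_lt (d i) hm).le) k
  rw [← hrem, Pi.smul_apply, nsmul_eq_mul, abs_mul, Nat.abs_cast] at hbound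
  exact le_of_mul_le_mul_left hbound (by exact_mod_cast hm)

theorem stmt4_general (n : ℕ) (A : AddSubmonoid (Fin n → ℤ)) (hFG : A.FG) (p : ℕ) :
    ∃ N₀ : ℕ, ∀ v ∈ pWeakNormalization A p, p ^ N₀ • v ∈ A := by
  obtain ⟨S, rfl⟩ := hFG
  rw [← Subtype.range_coe (s := (S : Set (Fin n → ℤ)))]
  set x : ↥(S : Set (Fin n → ℤ)) → Fin n → ℤ := Subtype.val
  have hx : ∀ c, Fintype.linearCombination ℕ x c ∈ AddSubmonoid.closure (Set.range x) :=
    fun c => AddSubmonoid.mem_closure_range_iff_of_fintype.mpr ⟨c, rfl⟩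
  obtain ⟨T, hT, hdecomp⟩ := exists_finite_forall_eq_add_linearCombination_of_nsmul_mem x
  choose N hN using fun t =>
    exists_forall_pow_nsmul_add_mem (Fintype.linearCombination ℕ x).toAddMonoidHom hx t p
  refine ⟨hT.toFinset.sup N, ?_⟩
  rintro v ⟨⟨-, m, hm, hmv⟩, e, hev⟩
  obtain ⟨t, ht, c, rfl⟩ := hdecomp m v hm hmv
  exact AddSubmonoid.pow_nsmul_mem_of_le (Finset.le_sup (hT.mem_toFinset.mpr ht)) (hN t e c hev)

/-- there exists `N₀` with `p ^ N₀ • (*pA) ⊆ A`. -/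
theorem stmt4 (n : ℕ) (A : AddSubmonoid (Fin n → ℤ)) (hFG : A.FG)
    (hnonneg : ∀ v ∈ A, ∀ i, 0 ≤ v i) (p : ℕ) (hp : p.Prime) :
    ∃ N₀ : ℕ, ∀ v ∈ pWeakNormalization A p, p ^ N₀ • v ∈ A :=
  stmt4_general n A hFG p
end

section
/- Let A ⊆ ℕ^n be an affine semigroup, p a prime, and N ∈ ℕ. If ⟦A/p^N⟧ = ⟦A/p^{N+1}⟧, then *pA = ⟦A/p^N⟧. (This is the correctness criterion for the algorithm computing the p-weak normalization.) -/
/-!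
Once `⟦A/p^N⟧ = ⟦A/p^{N+1}⟧`, the chain `⟦A/p^N⟧ ⊆ ⟦A/p^{N+1}⟧ ⊆ ⋯` is constant: if `p^{N+k+1} • v ∈ A`
then `p • v` lies in `⟦A/p^{N+k}⟧ = ⟦A/p^N⟧`, i.e. `v ∈ ⟦A/p^{N+1}⟧ = ⟦A/p^N⟧`.
Since `*pA` is the union of this chain, it equals `⟦A/p^N⟧`.
-/

section QuotBy

variable {n : ℕ} {A : AddSubmonoid (Fin n → ℤ)}

theorem nsmul_mem_normalization {v : Fin n → ℤ} (hv : v ∈ normalization A) (k : ℕ) :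
    k • v ∈ normalization A := by
  obtain ⟨hG, m, hm, hmv⟩ := hv
  refine ⟨AddSubgroup.nsmul_mem _ hG k, m, hm, ?_⟩
  rw [smul_comm]
  exact AddSubmonoid.nsmul_mem A hmv k

theorem quotBy_mono_of_dvd {m m' : ℕ} (h : m ∣ m') : quotBy A m ⊆ quotBy A m' := by
  obtain ⟨k, rfl⟩ := h
  rintro v ⟨hv, hmv⟩
  refine ⟨hv, ?_⟩
  rw [mul_comm, mul_smul]
  exact AddSubmonoid.nsmul_mem A hmv k

theorem nsmul_mem_quotBy_of_mem_quotBy_mul {m k : ℕ} {v : Fin n → ℤ}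
    (hv : v ∈ quotBy A (m * k)) : k • v ∈ quotBy A m :=
  ⟨nsmul_mem_normalization hv.1 k, by rw [smul_smul]; exact hv.2⟩

theorem quotBy_pow_add_subset {p N : ℕ} (hstab : quotBy A (p ^ N) = quotBy A (p ^ (N + 1))) :
    ∀ k, quotBy A (p ^ (N + k)) ⊆ quotBy A (p ^ N)
  | 0 => le_rfl
  | k + 1 => fun v hv => by
    have hpv : p • v ∈ quotBy A (p ^ N) := by
      refine quotBy_pow_add_subset hstab k (nsmul_mem_quotBy_of_mem_quotBy_mul ?_)
      rw [← pow_succ]; exact hv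
    have hv' : v ∈ quotBy A (p ^ (N + 1)) := ⟨hv.1, by rw [pow_succ, mul_smul]; exact hpv.2⟩
    rwa [← hstab] at hv'

theorem pWeakNormalization_eq_iUnion_quotBy (p : ℕ) :
    pWeakNormalization A p = ⋃ e, quotBy A (p ^ e) := by
  ext v
  simp only [pWeakNormalization, quotBy, Set.mem_iUnion, Set.mem_ofPred_eq, exists_and_left]

end QuotBy

theorem stmt8_general (n : ℕ) (A : AddSubmonoid (Fin n → ℤ))
    (p : ℕ) (N : ℕ)
    (hstab : quotBy A (p ^ N) = quotBy A (p ^ (N + 1))) :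
    pWeakNormalization A p = quotBy A (p ^ N) := by
  rw [pWeakNormalization_eq_iUnion_quotBy]
  refine subset_antisymm (Set.iUnion_subset fun e => ?_) (Set.subset_iUnion_of_subset N le_rfl)
  rcases le_or_gt e N with h | h
  · exact quotBy_mono_of_dvd (pow_dvd_pow p h)
  · obtain ⟨k, rfl⟩ := Nat.exists_eq_add_of_lt h
    exact quotBy_pow_add_subset hstab (k + 1)

/-- if `⟦A/p^N⟧ = ⟦A/p^{N+1}⟧` then `*pA = ⟦A/p^N⟧`. -/
theorem stmt8 (n : ℕ) (A : AddSubmonoid (Fin n → ℤ)) (hFG : A.FG)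
    (hnonneg : ∀ v ∈ A, ∀ i, 0 ≤ v i) (p : ℕ) (hp : p.Prime) (N : ℕ)
    (hstab : quotBy A (p ^ N) = quotBy A (p ^ (N + 1))) :
    pWeakNormalization A p = quotBy A (p ^ N) :=
  stmt8_general n A p N hstab
end

section
/- Let A ⊆ ℕ^n be an affine semigroup, p a prime, and k a field of characteristic p. Then the set of elements of k[Ā] having some p^e-th power in k[A] equals k[*pA]; that is, {x ∈ k[Ā] : x^{p^e} ∈ k[A] for some e ∈ ℕ} = k[*pA] as subsets of the Laurent polynomial algebra. (Equivalently, the weak normalization of k[A] is k[*pA].) -/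
/-- For a subset `M ⊆ ℤ^n`, the `k`-linear span of the monomials `x^v` with `v ∈ M`
inside the Laurent polynomial algebra `AddMonoidAlgebra k (ℤ^n)`; when `M` is a
submonoid this is the semigroup algebra `k[M]`, viewed as a set. -/
def monSpan (k : Type*) [CommRing k] {n : ℕ} (M : Set (Fin n → ℤ)) :
    Set (AddMonoidAlgebra k (Fin n → ℤ)) :=
  (Submodule.span k {x : AddMonoidAlgebra k (Fin n → ℤ) |
      ∃ v ∈ M, x = AddMonoidAlgebra.single v (1 : k)} :
    Submodule k (AddMonoidAlgebra k (Fin n → ℤ)))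

/-! In characteristic `p`, `x ↦ x ^ p ^ e` is additive on `k[ℤ^n]`, so it sends `∑ c_v x^v` to
`∑ c_v ^ p ^ e x^(p^e • v)`; as `ℤ^n` is torsion-free and `k` is reduced, the support of
`x ^ p ^ e` is exactly `p^e • supp x`. Hence `x ^ p ^ e ∈ k[A]` iff `p^e • supp x ⊆ A`, and since
`p^e • v ∈ A` persists as `e` grows, one exponent serves the whole finite support. -/

open Filter

namespace AddMonoidAlgebra

variable {R G : Type*} [AddCommMonoid G]

lemma pow_expChar_pow [CommSemiring R] (p : ℕ) [ExpChar R p] (x : R[G]) (e : ℕ) :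
    x ^ p ^ e = mapDomain (p ^ e • ·) (map (iterateFrobenius R p e).toAddMonoidHom x) := by
  have : ExpChar R[G] p :=
    expChar_of_injective_ringHom (f := singleZeroRingHom) single_right_injective p
  induction x using induction_linear with
  | zero => simp [mapDomain_zero, zero_pow (expChar_pow_pos R p e).ne']
  | add x y hx hy => rw [add_pow_expChar_pow, hx, hy, AddMonoidAlgebra.map_add, mapDomain_add]
  | single v a => simp [map_single, mapDomain_single, iterateFrobenius_def]

lemma support_coeff_pow_expChar_pow [CommRing R] [IsReduced R] [IsAddTorsionFree G]
    [DecidableEq G] (p : ℕ) [ExpChar R p] (x : R[G]) (e : ℕ) :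
    (x ^ p ^ e).coeff.support = x.coeff.support.image (p ^ e • ·) := by
  rw [pow_expChar_pow p, mapDomain, coeff_ofCoeff,
    Finsupp.mapDomain_support_of_injective (nsmul_right_injective (expChar_pow_pos R p e).ne'),
    coeff_map]
  exact congrArg _ (Finsupp.support_mapRange_of_injective _ _ (iterateFrobenius_inj R p e))

end AddMonoidAlgebra

lemma mem_monSpan_iff {k : Type*} [CommRing k] {n : ℕ} {M : Set (Fin n → ℤ)}
    {x : AddMonoidAlgebra k (Fin n → ℤ)} : x ∈ monSpan k M ↔ ↑x.coeff.support ⊆ M := by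
  rw [monSpan, SetLike.mem_coe, ← AddMonoidAlgebra.mem_supported (R := k),
    AddMonoidAlgebra.supported_eq_span_single]
  simp only [Set.image, eq_comm]

lemma AddSubmonoid.eventually_pow_nsmul_mem {M : Type*} [AddMonoid M] {A : AddSubmonoid M}
    {p : ℕ} {v : M} (h : ∃ e, p ^ e • v ∈ A) : ∀ᶠ e in atTop, p ^ e • v ∈ A := by
  obtain ⟨e₀, he₀⟩ := h
  filter_upwards [eventually_ge_atTop e₀] with e he
  rw [← Nat.add_sub_cancel' he, pow_add, mul_nsmul]
  exact A.nsmul_mem he₀ _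

theorem stmt9_general (n : ℕ) (A : AddSubmonoid (Fin n → ℤ))
    (p : ℕ) (hp : p.Prime)
    (k : Type*) [Field k] [CharP k p] :
    {x : AddMonoidAlgebra k (Fin n → ℤ) |
        x ∈ monSpan k (normalization A) ∧
        ∃ e : ℕ, x ^ p ^ e ∈ monSpan k (A : Set (Fin n → ℤ))} =
      monSpan k (pWeakNormalization A p) := by
  have : ExpChar k p := .prime hp
  classical
  ext x
  simp only [Set.mem_ofPred_eq, mem_monSpan_iff, AddMonoidAlgebra.support_coeff_pow_expChar_pow,
    Finset.coe_image, Set.image_subset_iff]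
  constructor
  · rintro ⟨hnorm, e, he⟩ v hv
    exact ⟨hnorm hv, e, he hv⟩
  · intro h
    have hpow : ∀ᶠ e in atTop, ∀ v ∈ x.coeff.support, p ^ e • v ∈ A :=
      (Finset.eventually_all _).2 fun v hv => A.eventually_pow_nsmul_mem (h hv).2
    exact ⟨fun v hv => (h hv).1, hpow.exists⟩

/-- over a field `k` of characteristic `p`, the set of elements of `k[Ā]`
having some `p^e`-th power in `k[A]` equals `k[*pA]`, i.e. the weak normalization of
`k[A]` is `k[*pA]`. -/
theorem stmt9 (n : ℕ) (A : AddSubmonoid (Fin n → ℤ)) (hFG : A.FG)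
    (hnonneg : ∀ v ∈ A, ∀ i, 0 ≤ v i)
    (p : ℕ) (hp : p.Prime)
    (k : Type*) [Field k] [CharP k p] :
    {x : AddMonoidAlgebra k (Fin n → ℤ) |
        x ∈ monSpan k (normalization A) ∧
        ∃ e : ℕ, x ^ p ^ e ∈ monSpan k (A : Set (Fin n → ℤ))} =
      monSpan k (pWeakNormalization A p) :=
  stmt9_general n A p hp k
end

section
/- Let A ⊆ ℕ^n be an affine semigroup. Then the set of primes p for which *pA ≠ ⁺A is finite. -/
/-!
Every finitely generated `A ⊆ ℤ^n` has a uniform conductor: some `M > 0` with `M • Ā ⊆ A`.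
Indeed, if `m • v = ∑ cₐ • a` over the generators, then `v` differs from an element of `A` by
`f = (1/m) ∑ (cₐ mod m) • a`, which lies in a fixed bounded box; the finitely many such `f`
with a positive multiple in `A` have a common multiplier.
For a prime `p ∤ M`, an element of `*pA` has the coprime multiples `M` and `p ^ e` in `A`, so it
lies in `⁺A`; conversely, by the Chicken McNugget theorem, an element of `⁺A` has every large
enough multiple, in particular some `p ^ e`, in `A`. Hence `*pA = ⁺A` for all primes `p > M`.
-/

section Conductor

variable {ι : Type*}

lemma abs_apply_le_of_nsmul_eq_sum {S : Finset (ι → ℤ)} {f : ι → ℤ} {m : ℕ}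
    {r : (ι → ℤ) → ℕ} (hr : ∀ a, r a < m) (hf : m • f = ∑ a ∈ S, r a • a) (j : ι) :
    |f j| ≤ ∑ a ∈ S, |a j| := by
  have hm : (0 : ℤ) < m := by exact_mod_cast Nat.zero_lt_of_lt (hr 0)
  have hfj : (m : ℤ) * f j = ∑ a ∈ S, (r a : ℤ) * a j := by
    simpa [Finset.sum_apply, nsmul_eq_mul] using congrFun hf j
  refine le_of_mul_le_mul_left ?_ hm
  calc (m : ℤ) * |f j| = |∑ a ∈ S, (r a : ℤ) * a j| := by rw [← hfj, abs_mul, Nat.abs_cast]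
    _ ≤ ∑ a ∈ S, |(r a : ℤ) * a j| := Finset.abs_sum_le_sum_abs _ _
    _ ≤ ∑ a ∈ S, (m : ℤ) * |a j| := Finset.sum_le_sum fun a _ => by
      rw [abs_mul, Nat.abs_cast]
      gcongr
      exact_mod_cast (hr a).le
    _ = m * ∑ a ∈ S, |a j| := (Finset.mul_sum _ _ _).symm

lemma exists_abs_apply_le_sub_mem_closure {S : Finset (ι → ℤ)} {v : ι → ℤ} {m : ℕ}
    (hm : 0 < m) (hmv : m • v ∈ AddSubmonoid.closure (S : Set (ι → ℤ))) :
    ∃ f, (∀ j, |f j| ≤ ∑ a ∈ S, |a j|) ∧ m • f ∈ AddSubmonoid.closure (S : Set (ι → ℤ)) ∧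
      v - f ∈ AddSubmonoid.closure (S : Set (ι → ℤ)) := by
  obtain ⟨c, -, hc⟩ := AddSubmonoid.mem_closure_finset.mp hmv
  set w := ∑ a ∈ S, (c a / m) • a
  have hw : w ∈ AddSubmonoid.closure (S : Set (ι → ℤ)) :=
    sum_mem fun a ha => nsmul_mem (AddSubmonoid.subset_closure ha) _
  have hmf : m • (v - w) = ∑ a ∈ S, (c a % m) • a := by
    rw [smul_sub, ← hc, Finset.smul_sum, sub_eq_iff_eq_add, ← Finset.sum_add_distrib]
    refine Finset.sum_congr rfl fun a _ => ?_
    rw [smul_smul, ← add_smul, Nat.mod_add_div]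
  refine ⟨v - w, abs_apply_le_of_nsmul_eq_sum (fun a => Nat.mod_lt _ hm) hmf, ?_,
    by simpa using hw⟩
  rw [hmf]
  exact sum_mem fun a ha => nsmul_mem (AddSubmonoid.subset_closure ha) _

lemma AddSubmonoid.exists_nsmul_mem_of_finite {M : Type*} [AddMonoid M] (A : AddSubmonoid M)
    {T : Set M} (hT : T.Finite) (hA : ∀ t ∈ T, ∃ m : ℕ, 0 < m ∧ m • t ∈ A) :
    ∃ N : ℕ, 0 < N ∧ ∀ t ∈ T, N • t ∈ A := by
  choose! m hm_pos hm using hA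
  refine ⟨∏ t ∈ hT.toFinset, m t,
    Finset.prod_pos fun t ht => hm_pos t (hT.mem_toFinset.mp ht), fun t ht => ?_⟩
  obtain ⟨k, hk⟩ := Finset.dvd_prod_of_mem m (hT.mem_toFinset.mpr ht)
  rw [hk, mul_comm, mul_smul]
  exact nsmul_mem (hm t ht) k

theorem AddSubmonoid.FG.exists_uniform_nsmul_mem [Finite ι] {A : AddSubmonoid (ι → ℤ)}
    (hA : A.FG) : ∃ N : ℕ, 0 < N ∧ ∀ (v : ι → ℤ) (m : ℕ), 0 < m → m • v ∈ A → N • v ∈ A := by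
  obtain ⟨S, rfl⟩ := hA
  set T := {f : ι → ℤ | (∀ j, |f j| ≤ ∑ a ∈ S, |a j|) ∧
    ∃ m : ℕ, 0 < m ∧ m • f ∈ AddSubmonoid.closure (S : Set (ι → ℤ))}
  have hT : T.Finite := by
    refine (Set.Finite.pi fun j => Set.finite_Icc (-∑ a ∈ S, |a j|) (∑ a ∈ S, |a j|)).subset ?_
    exact fun f hf j _ => abs_le.mp (hf.1 j)
  obtain ⟨N, hN, hNT⟩ := exists_nsmul_mem_of_finite _ hT fun t ht => ht.2
  refine ⟨N, hN, fun v m hm hmv => ?_⟩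
  obtain ⟨f, hfj, hmf, hvf⟩ := exists_abs_apply_le_sub_mem_closure hm hmv
  have := add_mem (nsmul_mem hvf N) (hNT f ⟨hfj, m, hm, hmf⟩)
  rwa [← smul_add, sub_add_cancel] at this

end Conductor

lemma AddSubmonoid.nsmul_mem_of_coprime_s14 {M : Type*} [AddMonoid M] (A : AddSubmonoid M)
    {v : M} {m m' k : ℕ} (hcop : m.Coprime m') (hm : m • v ∈ A) (hm' : m' • v ∈ A)
    (hk : m.pred * m'.pred ≤ k) : k • v ∈ A := by
  obtain ⟨a, b, rfl⟩ :=
    Nat.exists_add_mul_eq_of_gcd_dvd_of_mul_pred_le m m' k (hcop.gcd_eq_one ▸ one_dvd k) hk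
  rw [add_nsmul, mul_nsmul', mul_nsmul']
  exact add_mem (nsmul_mem hm a) (nsmul_mem hm' b)

section WeakNormalization

variable {n : ℕ} (A : AddSubmonoid (Fin n → ℤ))

lemma seminormalization_subset_pWeakNormalization {p : ℕ} (hp : 1 < p) :
    seminormalization A ⊆ pWeakNormalization A p := by
  rintro v ⟨hG, m, m', hm, -, hcop, hmv, hm'v⟩
  refine ⟨⟨hG, m, hm, hmv⟩, m.pred * m'.pred, ?_⟩
  exact A.nsmul_mem_of_coprime_s14 hcop hmv hm'v (Nat.lt_pow_self hp).le

lemma pWeakNormalization_subset_seminormalization {M p : ℕ} (hM : 0 < M)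
    (hMA : ∀ v ∈ normalization A, M • v ∈ A) (hp : 0 < p) (hMp : M.Coprime p) :
    pWeakNormalization A p ⊆ seminormalization A := by
  rintro v ⟨hv, e, hev⟩
  exact ⟨hv.1, M, p ^ e, hM, Nat.pow_pos hp, hMp.pow_right e, hMA v hv, hev⟩

end WeakNormalization

theorem stmt14_general (n : ℕ) (A : AddSubmonoid (Fin n → ℤ)) (hFG : A.FG) :
    {p : ℕ | p.Prime ∧ pWeakNormalization A p ≠ seminormalization A}.Finite := by
  obtain ⟨M, hM, hMA⟩ := hFG.exists_uniform_nsmul_mem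
  refine (Set.finite_Iic M).subset ?_
  rintro p ⟨hp, hne⟩
  by_contra hpM
  have hMp : M.Coprime p :=
    (hp.coprime_iff_not_dvd.mpr fun hdvd => hpM (Nat.le_of_dvd hM hdvd)).symm
  refine hne (subset_antisymm ?_ (seminormalization_subset_pWeakNormalization A hp.one_lt))
  exact pWeakNormalization_subset_seminormalization A hM
    (fun v ⟨_, m, hm, hmv⟩ => hMA v m hm hmv) hp.pos hMp

/-- the set of primes `p` with `*pA ≠ ⁺A` is finite. -/
theorem stmt14 (n : ℕ) (A : AddSubmonoid (Fin n → ℤ)) (hFG : A.FG)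
    (hnonneg : ∀ v ∈ A, ∀ i, 0 ≤ v i) :
    {p : ℕ | p.Prime ∧ pWeakNormalization A p ≠ seminormalization A}.Finite :=
  stmt14_general n A hFG
end

section
/- Let A ⊆ ℕ^n be an affine semigroup, p a prime, and S ⊆ {1,…,s} a subset of the generators with F = F_S. Suppose v ∈ G(A) has image in ℝ^n lying in the ℝ-linear span of {a_i : i ∈ S}, with v ∉ G(A ∩ F) and p•v ∈ G(A ∩ F). Then there exists v' ∈ G(A) whose image lies in int(F), with v' ∉ G(A ∩ F) and p•v' ∈ G(A ∩ F). -/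
/-- The face `F_S` of the cone `C(A)`: all `ℝ≥0`-linear combinations of `{a i : i ∈ S}`. -/
def face {n s : ℕ} (a : Fin s → (Fin n → ℤ)) (S : Finset (Fin s)) : Set (Fin n → ℝ) :=
  {x | ∃ c : Fin s → ℝ, (∀ i, 0 ≤ c i) ∧ x = ∑ i ∈ S, c i • toR (a i)}

/-- The interior `int(F_S)` of the face `F_S`: all strictly positive `ℝ`-linear
combinations of `{a i : i ∈ S}`. -/
def faceInt {n s : ℕ} (a : Fin s → (Fin n → ℤ)) (S : Finset (Fin s)) : Set (Fin n → ℝ) :=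
  {x | ∃ c : Fin s → ℝ, (∀ i ∈ S, 0 < c i) ∧ x = ∑ i ∈ S, c i • toR (a i)}

/-- `G(A ∩ F_S)`: the subgroup of `ℤ^n` generated by the elements of `A`
whose image in `ℝ^n` lies in the face `F_S`. -/
def faceGroup {n s : ℕ} (A : AddSubmonoid (Fin n → ℤ)) (a : Fin s → (Fin n → ℤ))
    (S : Finset (Fin s)) : AddSubgroup (Fin n → ℤ) :=
  AddSubgroup.closure {v | v ∈ A ∧ toR v ∈ face a S}

/-!
Write `w = ∑_{i ∈ S} a_i`. It lies in `A ∩ F`, so adding a multiple `N • w` to `v` changes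
neither `v ∉ G(A ∩ F)` nor `p • v ∈ G(A ∩ F)`. If `v = ∑_{i ∈ S} λ_i a_i` over `ℝ`, then
`v + N • w = ∑_{i ∈ S} (λ_i + N) a_i`, and all coefficients are positive once `N > ∑ |λ_i|`.
-/

open Finset

section toR

variable {n : ℕ}

lemma toR_add (u v : Fin n → ℤ) : toR (u + v) = toR u + toR v := by
  funext j
  simp [toR]

lemma toR_nsmul (N : ℕ) (v : Fin n → ℤ) : toR (N • v) = (N : ℝ) • toR v := by
  funext j
  simp [toR]

lemma toR_sum {ι : Type*} (S : Finset ι) (f : ι → Fin n → ℤ) :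
    toR (∑ i ∈ S, f i) = ∑ i ∈ S, toR (f i) := by
  funext j
  simp [toR, Finset.sum_apply]

end toR

section face

variable {n s : ℕ} (a : Fin s → (Fin n → ℤ)) (S : Finset (Fin s))

lemma toR_mem_face_of_mem {i : Fin s} (hi : i ∈ S) : toR (a i) ∈ face a S := by
  classical
  refine ⟨Pi.single i (1 : ℝ), (Pi.single_nonneg.2 zero_le_one : (0 : Fin s → ℝ) ≤ _), ?_⟩
  simp [Pi.single_apply, hi]

lemma sum_mem_faceGroup (A : AddSubmonoid (Fin n → ℤ)) (ha : ∀ i ∈ S, a i ∈ A) :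
    ∑ i ∈ S, a i ∈ faceGroup A a S :=
  AddSubgroup.sum_mem _ fun i hi => AddSubgroup.subset_closure ⟨ha i hi, toR_mem_face_of_mem a S hi⟩

lemma exists_nat_add_smul_sum_mem_faceInt {x : Fin n → ℝ}
    (hx : x ∈ Submodule.span ℝ (toR '' (a '' (S : Set (Fin s))))) :
    ∃ N : ℕ, x + (N : ℝ) • ∑ i ∈ S, toR (a i) ∈ faceInt a S := by
  rw [Set.image_image, Submodule.mem_span_image_finset_iff_exists_fun'] at hx
  obtain ⟨l, rfl⟩ := hx
  obtain ⟨N, hN⟩ := exists_nat_gt (∑ i ∈ S, |l i|)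
  refine ⟨N, fun i => l i + N, fun i hi => ?_, ?_⟩
  · have := single_le_sum (fun j _ => abs_nonneg (l j)) hi
    linarith [neg_abs_le (l i)]
  · simp only [smul_sum, ← sum_add_distrib, add_smul]

end face

theorem stmt15_general (n s : ℕ) (a : Fin s → (Fin n → ℤ)) (A : AddSubmonoid (Fin n → ℤ))
    (hgen : A = AddSubmonoid.closure (Set.range a))
    (p : ℕ) (S : Finset (Fin s)) (v : Fin n → ℤ)
    (hv : v ∈ AddSubgroup.closure (A : Set (Fin n → ℤ)))
    (hspan : toR v ∈ Submodule.span ℝ (toR '' (a '' (S : Set (Fin s)))))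
    (hvnot : v ∉ faceGroup A a S)
    (hpv : p • v ∈ faceGroup A a S) :
    ∃ v' : Fin n → ℤ,
      v' ∈ AddSubgroup.closure (A : Set (Fin n → ℤ)) ∧
      toR v' ∈ faceInt a S ∧
      v' ∉ faceGroup A a S ∧
      p • v' ∈ faceGroup A a S := by
  have ha : ∀ i, a i ∈ A := fun i => hgen ▸ AddSubmonoid.subset_closure (Set.mem_range_self i)
  set w := ∑ i ∈ S, a i
  have hwA : w ∈ A := A.sum_mem fun i _ => ha i
  have hwF : w ∈ faceGroup A a S := sum_mem_faceGroup a S A fun i _ => ha i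
  obtain ⟨N, hN⟩ := exists_nat_add_smul_sum_mem_faceInt a S hspan
  refine ⟨v + N • w, add_mem hv (nsmul_mem (AddSubgroup.subset_closure hwA) N), ?_, ?_, ?_⟩
  · rwa [toR_add, toR_nsmul, toR_sum]
  · exact fun h => hvnot ((AddSubgroup.add_mem_cancel_right _ (nsmul_mem hwF N)).mp h)
  · rw [smul_add, smul_comm]
    exact add_mem hpv (nsmul_mem (nsmul_mem hwF p) N)

/-- moving a witness into the interior of the face. -/
theorem stmt15 (n s : ℕ) (a : Fin s → (Fin n → ℤ)) (A : AddSubmonoid (Fin n → ℤ))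
    (hgen : A = AddSubmonoid.closure (Set.range a))
    (hnonneg : ∀ v ∈ A, ∀ i, 0 ≤ v i)
    (p : ℕ) (hp : p.Prime) (S : Finset (Fin s)) (v : Fin n → ℤ)
    (hv : v ∈ AddSubgroup.closure (A : Set (Fin n → ℤ)))
    (hspan : toR v ∈ Submodule.span ℝ (toR '' (a '' (S : Set (Fin s)))))
    (hvnot : v ∉ faceGroup A a S)
    (hpv : p • v ∈ faceGroup A a S) :
    ∃ v' : Fin n → ℤ,
      v' ∈ AddSubgroup.closure (A : Set (Fin n → ℤ)) ∧
      toR v' ∈ faceInt a S ∧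
      v' ∉ faceGroup A a S ∧
      p • v' ∈ faceGroup A a S :=
  stmt15_general n s a A hgen p S v hv hspan hvnot hpv
end

section
/- Let A ⊆ ℕ^n be an affine semigroup, k a field of characteristic p > 0, and N₀ ∈ ℕ such that p^{N₀}•v ∈ A for every v ∈ *pA. Then for every ideal I of k[A], the Frobenius test exponent of I is at most N₀: for every x ∈ k[A], if x^{p^e} ∈ I^{[p^e]} for some e ∈ ℕ, then x^{p^{N₀}} ∈ I^{[p^{N₀}]}. -/
/-- For a subset `M ⊆ ℤ^n`, the `k`-subalgebra of the Laurent polynomial algebra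
`AddMonoidAlgebra k (ℤ^n)` spanned by the monomials `x^v` with `v ∈ M`; when `M` is a
submonoid this is the semigroup algebra `k[M]`. -/
noncomputable def monAlg (k : Type*) [CommRing k] {n : ℕ} (M : Set (Fin n → ℤ)) :
    Subalgebra k (AddMonoidAlgebra k (Fin n → ℤ)) :=
  Algebra.adjoin k {x : AddMonoidAlgebra k (Fin n → ℤ) |
    ∃ v ∈ M, x = AddMonoidAlgebra.single v (1 : k)}

/-!
Let `q = p ^ e` and `G = G(A)`. Choose an additive `θ : k → k` with `θ 1 = 1` and
`θ (a ^ q * c) = a * θ c` (a `k^q`-linear retraction `k → k^q` followed by the inverse of the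
Frobenius). The map `Φ = descend G _ θ` on Laurent polynomials, which moves the coefficient `c`
of `x ^ (q • v)` to `θ c • x ^ v` for `v ∈ G` and discards all other terms, satisfies
`Φ (z ^ q * y) = z * Φ y` whenever `z` is supported in `G`. Applying `Φ` to
`x ^ q = ∑ cᵢ * bᵢ ^ q` with `bᵢ ∈ I` gives `x = ∑ bᵢ * Φ cᵢ`, where `Φ cᵢ` is supported on
`{v ∈ G | q • v ∈ A} ⊆ *pA`. Hence `(Φ cᵢ) ^ p ^ N₀` is supported on `p ^ N₀ • *pA ⊆ A`, and
raising to the `p ^ N₀`-th power exhibits `x ^ p ^ N₀` as an element of `I^[p ^ N₀]`.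
-/

open AddMonoidAlgebra

theorem exists_iterateFrobenius_retraction (k : Type*) [Field k] (p : ℕ) [ExpChar k p] (e : ℕ) :
    ∃ θ : k →+ k, θ 1 = 1 ∧ ∀ a c, θ (a ^ p ^ e * c) = a * θ c := by
  let φ := iterateFrobenius k p e
  let F := φ.fieldRange
  obtain ⟨g, hg⟩ := (Algebra.linearMap F k).exists_leftInverse_of_injective
    (LinearMap.ker_eq_bot.mpr (algebraMap F k).injective)
  let ψ := φ.rangeRestrictFieldEquiv.symm
  have hψ (a : k) : ψ ⟨a ^ p ^ e, a, iterateFrobenius_def p e a⟩ = a :=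
    φ.rangeRestrictFieldEquiv.symm_apply_apply a
  have hg1 : g 1 = 1 := LinearMap.congr_fun hg 1
  refine ⟨ψ.toAddMonoidHom.comp g.toAddMonoidHom, by simp [hg1], fun a c => ?_⟩
  have : a ^ p ^ e * c = (⟨a ^ p ^ e, a, iterateFrobenius_def p e a⟩ : F) • c := rfl
  simp [this, hψ]

instance AddMonoidAlgebra.instExpChar {k M : Type*} [CommSemiring k] [AddMonoid M] (p : ℕ)
    [ExpChar k p] : ExpChar (AddMonoidAlgebra k M) p :=
  expChar_of_injective_algebraMap (fun _ _ h => single_right_injective h) p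

section Frobenius

variable {k M : Type*} [CommSemiring k] [AddCommMonoid M] (p : ℕ) [ExpChar k p]

theorem pow_expChar_pow_eq_sum (e : ℕ) (y : AddMonoidAlgebra k M) :
    y ^ p ^ e = ∑ u ∈ y.coeff.support, single (p ^ e • u) (y.coeff u ^ p ^ e) := by
  conv_lhs => rw [← sum_coeff_single y]
  simp only [Finsupp.sum, sum_pow_char_pow, single_pow]

theorem support_pow_expChar_pow_subset (e : ℕ) (y : AddMonoidAlgebra k M) :
    ↑(y ^ p ^ e).coeff.support ⊆ (p ^ e • ·) '' (y.coeff.support : Set M) := by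
  classical
  intro v hv
  rw [pow_expChar_pow_eq_sum p, coeff_sum] at hv
  obtain ⟨u, hu, hvu⟩ := Finset.mem_biUnion.mp (Finsupp.support_finsetSum hv)
  exact ⟨u, hu, (Finset.mem_singleton.mp (Finsupp.support_single_subset hvu)).symm⟩

end Frobenius

section Descend

variable {k M : Type*} [CommSemiring k] [AddCommGroup M] [IsAddTorsionFree M]

noncomputable def descend (G : AddSubgroup M) {q : ℕ} (hq : q ≠ 0) (θ : k →+ k) :
    AddMonoidAlgebra k M →+ AddMonoidAlgebra k M :=
  open Classical in
  { toFun y := ofCoeff <| ((y.coeff.comapDomain (q • ·)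
        (IsAddTorsionFree.nsmul_right_injective hq).injOn).filter (· ∈ G)).mapRange θ θ.map_zero
    map_zero' := by ext; simp [Finsupp.filter_apply]
    map_add' y z := by ext; simp [Finsupp.filter_apply]; split_ifs <;> simp }

variable {G : AddSubgroup M} {q : ℕ} {hq : q ≠ 0} {θ : k →+ k}

theorem coeff_descend_of_mem (y : AddMonoidAlgebra k M) {v : M} (hv : v ∈ G) :
    (descend G hq θ y).coeff v = θ (y.coeff (q • v)) := by
  simp [descend, hv]

theorem coeff_descend_of_notMem (y : AddMonoidAlgebra k M) {v : M} (hv : v ∉ G) :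
    (descend G hq θ y).coeff v = 0 := by
  simp [descend, hv]

theorem support_descend_subset (y : AddMonoidAlgebra k M) :
    ↑(descend G hq θ y).coeff.support ⊆ {v | v ∈ G ∧ q • v ∈ y.coeff.support} := by
  intro v hv
  by_cases hvG : v ∈ G
  · refine ⟨hvG, Finsupp.mem_support_iff.mpr fun h => ?_⟩
    simp [Finsupp.mem_support_iff, coeff_descend_of_mem y hvG, h] at hv
  · simp [coeff_descend_of_notMem y hvG] at hv

theorem descend_one (hθ : θ 1 = 1) : descend G hq θ 1 = 1 := by
  classical
  ext v
  by_cases hv : v ∈ G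
  · rw [coeff_descend_of_mem _ hv, one_def, coeff_single, Finsupp.single_apply,
      Finsupp.single_apply]
    split_ifs with hqv hv0 hv0
    · exact hθ
    · exact absurd (by simpa [hq, eq_comm] using hqv) hv0
    · simp [← hv0] at hqv
    · exact θ.map_zero
  · have : v ≠ 0 := fun h => hv (h ▸ G.zero_mem)
    simp [coeff_descend_of_notMem _ hv, one_def, this.symm]

theorem descend_single_mul (hθ : ∀ a c, θ (a ^ q * c) = a * θ c) {u : M} (hu : u ∈ G)
    (c : k) (y : AddMonoidAlgebra k M) :
    descend G hq θ (single (q • u) (c ^ q) * y) = single u c * descend G hq θ y := by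
  ext v
  by_cases hv : v ∈ G
  · have : -u + v ∈ G := G.add_mem (G.neg_mem hu) hv
    simp [coeff_descend_of_mem _ hv, coeff_descend_of_mem _ this, coeff_single_mul_apply, hθ]
  · have : -u + v ∉ G := fun h => hv (by simpa using G.add_mem hu h)
    simp [coeff_descend_of_notMem _ hv, coeff_descend_of_notMem _ this, coeff_single_mul_apply]

variable (p : ℕ) [ExpChar k p] {e : ℕ} {hpe : p ^ e ≠ 0}

theorem descend_pow_mul (hθ : ∀ a c, θ (a ^ p ^ e * c) = a * θ c)
    {z : AddMonoidAlgebra k M} (hz : ↑z.coeff.support ⊆ (G : Set M)) (y : AddMonoidAlgebra k M) :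
    descend G hpe θ (z ^ p ^ e * y) = z * descend G hpe θ y := by
  conv_rhs => rw [← sum_coeff_single z]
  rw [pow_expChar_pow_eq_sum p, Finsupp.sum, Finset.sum_mul, Finset.sum_mul, map_sum]
  exact Finset.sum_congr rfl fun u hu => descend_single_mul hθ (hz hu) _ _

theorem descend_pow (hθ1 : θ 1 = 1) (hθ : ∀ a c, θ (a ^ p ^ e * c) = a * θ c)
    {z : AddMonoidAlgebra k M} (hz : ↑z.coeff.support ⊆ (G : Set M)) :
    descend G hpe θ (z ^ p ^ e) = z := by
  simpa [descend_one hθ1] using descend_pow_mul p (hpe := hpe) hθ hz 1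

end Descend

section MonAlg

variable {k : Type*} [CommRing k] {n : ℕ} {A : AddSubmonoid (Fin n → ℤ)}

theorem mem_monAlg_iff {y : AddMonoidAlgebra k (Fin n → ℤ)} :
    y ∈ monAlg k A ↔ (y.coeff.support : Set (Fin n → ℤ)) ⊆ A := by
  classical
  constructor
  · intro hy
    induction hy using Algebra.adjoin_induction with
    | mem _ h =>
      obtain ⟨v, hv, rfl⟩ := h
      exact fun w hw => (Finset.mem_singleton.mp (Finsupp.support_single_subset hw)) ▸ hv
    | algebraMap r =>
      exact fun w hw => (Finset.mem_singleton.mp (Finsupp.support_single_subset hw)) ▸ A.zero_mem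
    | add y z _ _ hy hz =>
      exact (Finset.coe_subset.mpr Finsupp.support_add).trans (by simpa using And.intro hy hz)
    | mul y z _ _ hy hz =>
      refine (Finset.coe_subset.mpr (support_coeff_mul_subset y z)).trans ?_
      rintro _ h
      obtain ⟨a, ha, b, hb, rfl⟩ := Finset.mem_add.mp h
      exact A.add_mem (hy ha) (hz hb)
  · intro hy
    have : y ∈ Submodule.span k ((fun v => single v (1 : k)) '' A) := by
      rw [← supported_eq_span_single]; exact hy
    refine Algebra.span_le_adjoin k _ (Submodule.span_mono ?_ this)
    rintro _ ⟨v, hv, rfl⟩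
    exact ⟨v, hv, rfl⟩

theorem support_subset_closure_of_mem_monAlg {y : AddMonoidAlgebra k (Fin n → ℤ)}
    (hy : y ∈ monAlg k A) :
    (y.coeff.support : Set (Fin n → ℤ)) ⊆ AddSubgroup.closure (A : Set (Fin n → ℤ)) :=
  (mem_monAlg_iff.mp hy).trans AddSubgroup.subset_closure

theorem descend_pow_mem_monAlg (p : ℕ) [ExpChar k p] {e N : ℕ} {hpe : p ^ e ≠ 0}
    (hN : ∀ v ∈ pWeakNormalization A p, p ^ N • v ∈ A) (θ : k →+ k)
    {y : AddMonoidAlgebra k (Fin n → ℤ)} (hy : y ∈ monAlg k A) :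
    descend (AddSubgroup.closure (A : Set (Fin n → ℤ))) hpe θ y ^ p ^ N ∈ monAlg k A := by
  refine mem_monAlg_iff.mpr ((support_pow_expChar_pow_subset p N _).trans ?_)
  rintro _ ⟨v, hv, rfl⟩
  obtain ⟨hvG, hvy⟩ := support_descend_subset _ hv
  have hvA : p ^ e • v ∈ A := mem_monAlg_iff.mp hy hvy
  exact hN v ⟨⟨hvG, p ^ e, Nat.pos_of_ne_zero hpe, hvA⟩, e, hvA⟩

end MonAlg

theorem stmt17_general (n : ℕ) (A : AddSubmonoid (Fin n → ℤ))
    (p : ℕ) (hp : p.Prime)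
    (k : Type*) [Field k] [CharP k p]
    (N₀ : ℕ) (hN₀ : ∀ v ∈ pWeakNormalization A p, p ^ N₀ • v ∈ A)
    (I : Ideal (monAlg k (A : Set (Fin n → ℤ))))
    (x : monAlg k (A : Set (Fin n → ℤ)))
    (hx : ∃ e : ℕ, x ^ p ^ e ∈
      Ideal.span ((fun y => y ^ p ^ e) '' (I : Set (monAlg k (A : Set (Fin n → ℤ)))))) :
    x ^ p ^ N₀ ∈
      Ideal.span ((fun y => y ^ p ^ N₀) '' (I : Set (monAlg k (A : Set (Fin n → ℤ))))) := by
  have : ExpChar k p := ExpChar.prime hp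
  obtain ⟨e, hxe⟩ := hx
  obtain ⟨t, htI, c, hc⟩ := (Submodule.mem_span_image_iff_exists_fun _).mp hxe
  obtain ⟨θ, hθ1, hθ⟩ := exists_iterateFrobenius_retraction k p e
  have hpe : p ^ e ≠ 0 := pow_ne_zero e hp.ne_zero
  let Φ := descend (AddSubgroup.closure (A : Set (Fin n → ℤ))) hpe θ
  have hx' :
      (x : AddMonoidAlgebra k (Fin n → ℤ)) = ∑ i : t, (i : AddMonoidAlgebra k _) * Φ (c i) := by
    have hΦ := congrArg (fun y : monAlg k (A : Set (Fin n → ℤ)) => Φ y) hc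
    simp only [smul_eq_mul, AddSubmonoidClass.coe_finsetSum, MulMemClass.coe_mul,
      SubmonoidClass.coe_pow, map_sum] at hΦ
    rw [← descend_pow p (hpe := hpe) hθ1 hθ (support_subset_closure_of_mem_monAlg x.2), ← hΦ]
    refine Finset.sum_congr rfl fun i _ => ?_
    rw [mul_comm, descend_pow_mul p hθ (support_subset_closure_of_mem_monAlg i.1.2)]
  refine (Submodule.mem_span_image_iff_exists_fun _).mpr ⟨t, htI,
    fun i => ⟨Φ (c i) ^ p ^ N₀, descend_pow_mem_monAlg p hN₀ θ (c i).2⟩, Subtype.ext ?_⟩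
  simp only [smul_eq_mul, AddSubmonoidClass.coe_finsetSum, MulMemClass.coe_mul,
    SubmonoidClass.coe_pow]
  rw [hx', sum_pow_char_pow]
  exact Finset.sum_congr rfl fun i _ => by rw [mul_pow, mul_comm]

/-- if `p ^ N₀ • (*pA) ⊆ A`, then the Frobenius test exponent of every
ideal `I ⊆ k[A]` is at most `N₀`: whenever `x ^ (p ^ e) ∈ I^{[p^e]}` for some `e`,
already `x ^ (p ^ N₀) ∈ I^{[p^{N₀}]}`. -/
theorem stmt17 (n : ℕ) (A : AddSubmonoid (Fin n → ℤ)) (hFG : A.FG)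
    (hnonneg : ∀ v ∈ A, ∀ i, 0 ≤ v i)
    (p : ℕ) (hp : p.Prime)
    (k : Type*) [Field k] [CharP k p]
    (N₀ : ℕ) (hN₀ : ∀ v ∈ pWeakNormalization A p, p ^ N₀ • v ∈ A)
    (I : Ideal (monAlg k (A : Set (Fin n → ℤ))))
    (x : monAlg k (A : Set (Fin n → ℤ)))
    (hx : ∃ e : ℕ, x ^ p ^ e ∈
      Ideal.span ((fun y => y ^ p ^ e) '' (I : Set (monAlg k (A : Set (Fin n → ℤ)))))) :
    x ^ p ^ N₀ ∈
      Ideal.span ((fun y => y ^ p ^ N₀) '' (I : Set (monAlg k (A : Set (Fin n → ℤ))))) :=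
  stmt17_general n A p hp k N₀ hN₀ I x hx
end
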